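/- Left extension lemma: let Φ₀ be a finite set of formulas closed under subformulas and under ∼. For any subsets u, v ⊆ Φ₀ and set of formulas w such that the pair (u,v) is w-consistent in ℜ, there exists a subset u' ⊆ Φ₀ with u ⊆ u' such that u' is consistent in ℜ, u' is complete (for every φ ∈ Φ₀, φ ∈ u' or ∼φ ∈ u'), and the pair (u',v) is w-consistent in ℜ. -/

import Mathlib

/-- Formulas of the modal language 𝓛: propositional variables, ⊥, →, and ▷. -/
inductive Formula : Type
  | var : ℕ → Formula
  | bot : Formula
  | imp : Formula → Formula → Formula
  | tri : Formula → Formula → Formula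
deriving DecidableEq

namespace Formula

/-- ¬φ := φ → ⊥ -/
def neg (φ : Formula) : Formula := imp φ bot
/-- ⊤ := ¬⊥ -/
def top : Formula := neg bot
/-- φ ∨ ψ := ¬φ → ψ -/
def disj (φ ψ : Formula) : Formula := imp (neg φ) ψ
/-- φ ∧ ψ := ¬(φ → ¬ψ) -/
def conj (φ ψ : Formula) : Formula := neg (imp φ (neg ψ))

/-- `φ` is a substitution instance of a classical propositional tautology:
it evaluates to `true` under every boolean valuation of formulas that
respects `⊥` and `→` (variables and `▷`-formulas are treated as atoms). -/
def IsPropTaut (φ : Formula) : Prop :=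
  ∀ v : Formula → Bool, v bot = false →
    (∀ a b, v (imp a b) = (!(v a) || v b)) → v φ = true

/-- Hilbert-style provability.  `Prv false` is the logic ℜ (axioms: classical
tautologies, A1, A2, A3; rules: Modus Ponens and monotonicity M);
`Prv true` is the logic ℜ_d, which additionally has axiom A4. -/
inductive Prv : Bool → Formula → Prop
  | taut {d : Bool} {φ} : IsPropTaut φ → Prv d φ
  | a1 {d : Bool} (φ ψ χ) : Prv d (imp (tri φ ψ) (imp (tri χ ψ) (tri (disj φ χ) ψ)))
  | a2 {d : Bool} (φ) : Prv d (tri bot φ)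
  | a3 {d : Bool} (φ) : Prv d (tri φ top)
  | a4 (φ ψ χ) : Prv true (imp (tri φ ψ) (imp (tri φ χ) (tri φ (conj ψ χ))))
  | mp {d : Bool} {φ ψ} : Prv d (imp φ ψ) → Prv d φ → Prv d ψ
  | mono {d : Bool} {φ₁ φ₂ ψ₁ ψ₂} : Prv d (imp φ₁ φ₂) → Prv d (imp ψ₁ ψ₂) →
      Prv d (imp (tri φ₂ ψ₁) (tri φ₁ ψ₂))

/-- `Deriv d Δ φ`: φ is derivable from the hypotheses Δ together with all
theorems of the logic (`Prv d`) using only Modus Ponens. -/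
inductive Deriv (d : Bool) (Δ : Set Formula) : Formula → Prop
  | hyp {φ} : φ ∈ Δ → Deriv d Δ φ
  | thm {φ} : Prv d φ → Deriv d Δ φ
  | mp {φ ψ} : Deriv d Δ (imp φ ψ) → Deriv d Δ φ → Deriv d Δ ψ

/-- Conjunction of a list of formulas (empty conjunction is ⊤). -/
def conjList : List Formula → Formula
  | [] => top
  | φ :: l => conj φ (conjList l)

/-- ⋀Γ : conjunction of all formulas of a finite set Γ (⋀∅ = ⊤). -/
noncomputable def bigConj (Γ : Finset Formula) : Formula := conjList Γ.toList

/-- A set of formulas is consistent if ⊥ is not derivable from it. -/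
def Consistent (d : Bool) (Δ : Set Formula) : Prop := ¬ Deriv d Δ bot

/-- The pair (u,v) is w-consistent: w ⊬ ⋀u ▷ ¬⋀v. -/
def WCons (d : Bool) (w : Set Formula) (u v : Finset Formula) : Prop :=
  ¬ Deriv d w (tri (bigConj u) (neg (bigConj v)))

/-- The operation ∼: ∼(¬φ) = φ, and ∼φ = ¬φ if φ is not a negation. -/
def simNeg : Formula → Formula
  | imp φ bot => φ
  | φ => neg φ

/-- Φ is closed under subformulas. -/
def SubClosed (Φ : Finset Formula) : Prop :=
  (∀ a b, imp a b ∈ Φ → a ∈ Φ ∧ b ∈ Φ) ∧ (∀ a b, tri a b ∈ Φ → a ∈ Φ ∧ b ∈ Φ)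

/-- Φ is closed under the operation ∼. -/
def SimClosed (Φ : Finset Formula) : Prop := ∀ φ ∈ Φ, simNeg φ ∈ Φ

/-- w is a maximal consistent subset of Φ: w ⊆ Φ, w is consistent, and for
every φ ∈ Φ either φ ∈ w or ∼φ ∈ w. -/
def MaxCons (d : Bool) (Φ : Finset Formula) (w : Finset Formula) : Prop :=
  w ⊆ Φ ∧ Consistent d ↑w ∧ ∀ φ ∈ Φ, φ ∈ w ∨ simNeg φ ∈ w

/-- Kripke forcing: `rel w u v` means u →_w v, `val w p` means w ⊩ p. -/
def Forces {W : Type*} (rel : W → W → W → Prop) (val : W → ℕ → Prop) :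
    W → Formula → Prop
  | w, var p => val w p
  | _, bot => False
  | w, imp a b => Forces rel val w a → Forces rel val w b
  | w, tri a b => ∀ u v, rel w u v → Forces rel val u a →
      ∃ v', rel w u v' ∧ Forces rel val v' b

end Formula

/-- A Kripke model: a finite set of worlds, a ternary computability relation,
and a forcing relation between worlds and propositional variables. -/
structure KripkeModel where
  W : Type
  fin : Finite W
  rel : W → W → W → Prop
  val : W → ℕ → Prop

/-- A Kripke model is deterministic if for all worlds w, u there is at most
one v with u →_w v. -/
def KripkeModel.Deterministic (M : KripkeModel) : Prop :=
  ∀ w u v v', M.rel w u v → M.rel w u v' → v = v'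

/-- Forcing in a Kripke model. -/
def KripkeModel.Forces (M : KripkeModel) : M.W → Formula → Prop :=
  Formula.Forces M.rel M.val

/-- The standard enumeration of nondeterministic partial recursive functions:
ζ_w(u) = the set of possible outputs of machine (code) w on input u. -/
def zeta (w u : ℕ) : Set ℕ :=
  {v | ((Denumerable.ofNat Nat.Partrec.Code w).eval (Nat.pair u v)).Dom}

/-- The standard enumeration of deterministic partial recursive functions:
ξ_w(u) = the value of the partial recursive function with code w on input u. -/
def xi (w u : ℕ) : Part ℕ :=
  (Denumerable.ofNat Nat.Partrec.Code w).eval u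

namespace Formula

/-- Set semantics for nondeterministic partial recursive functions
(existential reading of ▷). -/
def semN (val : ℕ → Set ℕ) : Formula → Set ℕ
  | var p => val p
  | bot => ∅
  | imp a b => (Set.univ \ semN val a) ∪ semN val b
  | tri a b => {w | ∀ u ∈ semN val a, zeta w u ≠ ∅ → zeta w u ∩ semN val b ≠ ∅}

/-- Set semantics for deterministic partial recursive functions. -/
def semD (val : ℕ → Set ℕ) : Formula → Set ℕ
  | var p => val p
  | bot => ∅
  | imp a b => (Set.univ \ semD val a) ∪ semD val b
  | tri a b => {w | ∀ u ∈ semD val a, ∀ h : (xi w u).Dom, (xi w u).get h ∈ semD val b}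

/-- Universal set semantics for nondeterministic partial recursive functions:
every terminating computation path from φ* ends in ψ*. -/
def semU (val : ℕ → Set ℕ) : Formula → Set ℕ
  | var p => val p
  | bot => ∅
  | imp a b => (Set.univ \ semU val a) ∪ semU val b
  | tri a b => {w | ∀ u ∈ semU val a, zeta w u ⊆ semU val b}

/-- A canonical injective encoding of formulas as natural numbers. -/
def enc : Formula → ℕ
  | var n => 4 * n
  | bot => 1
  | imp a b => 4 * Nat.pair (enc a) (enc b) + 2
  | tri a b => 4 * Nat.pair (enc a) (enc b) + 3

end Formula

/-!
Go through the formulas φ of Φ₀ one at a time, adding φ or ∼φ to u. Since ⋀u implies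
⋀(u ∪ {φ}) ∨ ⋀(u ∪ {∼φ}), if both choices were w-inconsistent then axiom A1 and rule M would give
w ⊢ ⋀u ▷ ¬⋀v; so one choice keeps the pair w-consistent. A w-consistent u is consistent:
from u ⊢ ⊥ we get ⊢ ⋀u → ⊥, and M turns axiom A2, ⊥ ▷ ¬⋀v, into ⋀u ▷ ¬⋀v.
-/

namespace Formula

section Valuation

variable {v : Formula → Bool} (hbot : v bot = false)
  (himp : ∀ a b, v (imp a b) = (!(v a) || v b))
include hbot himp

lemma eval_neg (a : Formula) : v (neg a) = !(v a) := by
  simp [neg, himp, hbot]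

lemma eval_disj (a b : Formula) : v (disj a b) = (v a || v b) := by
  simp [disj, eval_neg hbot himp, himp]

lemma eval_simNeg (a : Formula) : v (simNeg a) = !(v a) := by
  cases a with
  | imp x y => cases y <;> simp [simNeg, neg, himp, hbot]
  | _ => simp [simNeg, neg, himp, hbot]

lemma eval_conjList (l : List Formula) : v (conjList l) = l.all v := by
  induction l with
  | nil => simp [conjList, top, eval_neg hbot himp, hbot]
  | cons a l ih => simp [conjList, conj, eval_neg hbot himp, himp, ih]

lemma eval_bigConj (Γ : Finset Formula) : v (bigConj Γ) = true ↔ ∀ x ∈ Γ, v x = true := by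
  simp [bigConj, eval_conjList hbot himp]

end Valuation

lemma isPropTaut_imp_self (a : Formula) : IsPropTaut (imp a a) := by
  intro v _ himp
  simp [himp]

lemma isPropTaut_imp_imp_self (a b : Formula) : IsPropTaut (imp a (imp b a)) := by
  intro v _ himp
  simp only [himp]
  cases v a <;> cases v b <;> rfl

lemma isPropTaut_imp_distrib (a b c : Formula) :
    IsPropTaut (imp (imp a (imp b c)) (imp (imp a b) (imp a c))) := by
  intro v _ himp
  simp only [himp]
  cases v a <;> cases v b <;> cases v c <;> rfl

lemma isPropTaut_bigConj_imp_of_mem {Γ : Finset Formula} {a : Formula} (ha : a ∈ Γ) :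
    IsPropTaut (imp (bigConj Γ) a) := by
  intro v hbot himp
  cases hΓ : v (bigConj Γ)
  · simp [himp, hΓ]
  · simp [himp, (eval_bigConj hbot himp Γ).1 hΓ a ha]

lemma isPropTaut_bigConj_imp_disj_insert (u : Finset Formula) (φ : Formula) :
    IsPropTaut (imp (bigConj u)
      (disj (bigConj (insert φ u)) (bigConj (insert (simNeg φ) u)))) := by
  intro v hbot himp
  rw [himp, eval_disj hbot himp]
  cases hu : v (bigConj u)
  · rfl
  · have hu' := (eval_bigConj hbot himp u).1 hu
    simp only [Bool.not_true, Bool.false_or, Bool.or_eq_true, eval_bigConj hbot himp,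
      Finset.forall_mem_insert, eval_simNeg hbot himp]
    cases v φ <;> simpa using hu'

lemma Deriv.prv_bigConj_imp {d : Bool} {u : Finset Formula} {φ : Formula}
    (h : Deriv d (↑u : Set Formula) φ) : Prv d (imp (bigConj u) φ) := by
  induction h with
  | hyp hφ => exact .taut (isPropTaut_bigConj_imp_of_mem hφ)
  | thm hφ => exact .mp (.taut (isPropTaut_imp_imp_self _ _)) hφ
  | mp _ _ ihImp ih => exact .mp (.mp (.taut (isPropTaut_imp_distrib _ _ _)) ihImp) ih

namespace WCons

variable {d : Bool} {w : Set Formula} {u v : Finset Formula}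

lemma consistent (h : WCons d w u v) : Consistent d (↑u : Set Formula) := by
  intro hbot
  have hmono : Prv d (imp (tri bot (neg (bigConj v))) (tri (bigConj u) (neg (bigConj v)))) :=
    .mono hbot.prv_bigConj_imp (.taut (isPropTaut_imp_self _))
  exact h (.thm (.mp hmono (.a2 _)))

lemma insert_or_insert_simNeg (φ : Formula) (h : WCons d w u v) :
    WCons d w (insert φ u) v ∨ WCons d w (insert (simNeg φ) u) v := by
  by_contra! hboth
  obtain ⟨hφ, hsimφ⟩ := hboth
  set ψ := neg (bigConj v)
  have hdisj : Deriv d w (tri (disj (bigConj (insert φ u)) (bigConj (insert (simNeg φ) u))) ψ) :=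
    .mp (.mp (.thm (.a1 _ _ _)) (not_not.1 hφ)) (not_not.1 hsimφ)
  have hmono : Prv d (imp
      (tri (disj (bigConj (insert φ u)) (bigConj (insert (simNeg φ) u))) ψ)
      (tri (bigConj u) ψ)) :=
    .mono (.taut (isPropTaut_bigConj_imp_disj_insert u φ)) (.taut (isPropTaut_imp_self ψ))
  exact h (.mp (.thm hmono) hdisj)

lemma exists_complete_extension (s : Finset Formula) (h : WCons d w u v) :
    ∃ u' : Finset Formula, u ⊆ u' ∧ u' ⊆ u ∪ s ∪ s.image simNeg ∧
      (∀ φ ∈ s, φ ∈ u' ∨ simNeg φ ∈ u') ∧ WCons d w u' v := by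
  induction s using Finset.induction_on generalizing u with
  | empty => exact ⟨u, subset_rfl, Finset.subset_union_left.trans Finset.subset_union_left,
      by simp, h⟩
  | insert φ s _ ih =>
    obtain ⟨χ, hχ, h₁⟩ : ∃ χ, (χ = φ ∨ χ = simNeg φ) ∧ WCons d w (insert χ u) v := by
      rcases insert_or_insert_simNeg φ h with h₁ | h₁
      exacts [⟨φ, .inl rfl, h₁⟩, ⟨simNeg φ, .inr rfl, h₁⟩]
    obtain ⟨u', hsub, hbound, hcomplete, h'⟩ := ih h₁
    refine ⟨u', (Finset.subset_insert χ u).trans hsub, ?_, ?_, h'⟩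
    · intro ψ hψ
      have := hbound hψ
      simp only [Finset.mem_union, Finset.mem_insert, Finset.mem_image] at this ⊢
      grind
    · simp only [Finset.forall_mem_insert]
      refine ⟨?_, hcomplete⟩
      rcases hχ with rfl | rfl
      exacts [.inl (hsub (Finset.mem_insert_self _ _)), .inr (hsub (Finset.mem_insert_self _ _))]

end WCons

end Formula

open Formula in
theorem left_extension_general (Φ₀ : Finset Formula)
    (hsim : SimClosed Φ₀)
    (u v : Finset Formula) (hu : u ⊆ Φ₀)
    (w : Set Formula) (h : WCons false w u v) :
    ∃ u' : Finset Formula, u' ⊆ Φ₀ ∧ u ⊆ u' ∧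
      Consistent false (↑u' : Set Formula) ∧
      (∀ φ ∈ Φ₀, φ ∈ u' ∨ simNeg φ ∈ u') ∧
      WCons false w u' v := by
  obtain ⟨u', hsub, hbound, hcomplete, h'⟩ := h.exists_complete_extension Φ₀
  have hΦ₀ : u ∪ Φ₀ ∪ Φ₀.image simNeg ⊆ Φ₀ :=
    Finset.union_subset (Finset.union_subset hu subset_rfl) (Finset.image_subset_iff.2 hsim)
  exact ⟨u', hbound.trans hΦ₀, hsub, h'.consistent, hcomplete, h'⟩

open Formula in
/-- Left extension lemma: a w-consistent (in ℜ) pair (u,v) of subsets of a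
finite, subformula- and ∼-closed set Φ₀ can be extended on the left to a
complete consistent subset u' of Φ₀ keeping (u',v) w-consistent. -/
theorem left_extension (Φ₀ : Finset Formula)
    (hsub : SubClosed Φ₀) (hsim : SimClosed Φ₀)
    (u v : Finset Formula) (hu : u ⊆ Φ₀) (hv : v ⊆ Φ₀)
    (w : Set Formula) (h : WCons false w u v) :
    ∃ u' : Finset Formula, u' ⊆ Φ₀ ∧ u ⊆ u' ∧
      Consistent false (↑u' : Set Formula) ∧
      (∀ φ ∈ Φ₀, φ ∈ u' ∨ simNeg φ ∈ u') ∧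
      WCons false w u' v :=
  left_extension_general Φ₀ hsim u v hu w h
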